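/- arXiv:1912.00559 — 2 statements merged into one kernel-verified Lean document; each statement's English description precedes it below -/
import Mathlib

section
/- For all complex numbers u₀,u₁,u₂: Re(ū₂(⅓u₀ - 4/3 u₁ + u₂)) = G(u₁,u₂) - G(u₀,u₁) + (1/6)|u₂ - (3/2)(-⅔u₀ + 4/3 u₁)|², where G(x,y) = (1/6)|x|² + (5/6)|y|² - (2/3)Re(x ȳ). -/
open Complex

/-- The Hermitian form `G` for the BDF2 multiplier identity. -/
noncomputable def Gform (x y : ℂ) : ℝ :=
  (1/6) * ‖x‖^2 + (5/6) * ‖y‖^2 - (2/3) * (x * (starRingEnd ℂ y)).re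

theorem bdf2_multiplier_identity (u₀ u₁ u₂ : ℂ) :
    ((starRingEnd ℂ u₂) * ((1/3 : ℂ) * u₀ - (4/3 : ℂ) * u₁ + u₂)).re
      = Gform u₁ u₂ - Gform u₀ u₁
        + (1/6) * ‖u₂ - (3/2 : ℂ) * (-(2/3 : ℂ) * u₀ + (4/3 : ℂ) * u₁)‖^2 := by
  rw [show (1/3:ℂ) = ((1/3:ℝ):ℂ) by norm_num, show (4/3:ℂ) = ((4/3:ℝ):ℂ) by norm_num,
    show (3/2:ℂ) = ((3/2:ℝ):ℂ) by norm_num, show (-(2/3):ℂ) = ((-(2/3):ℝ):ℂ) by norm_num]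
  simp only [Gform, Complex.sq_norm, Complex.normSq_apply,
    Complex.mul_re, Complex.mul_im, Complex.sub_re, Complex.sub_im, Complex.add_re,
    Complex.add_im, Complex.neg_re, Complex.neg_im, Complex.ofReal_re, Complex.ofReal_im,
    Complex.conj_re, Complex.conj_im]
  ring
end

section
/- The cubic polynomial χ(λ) = λ³ + (-15√30/187 - 222/187)λ² + (312√30/34969 + 4533/69938)λ + (-45√30/13078406 - 656/6539203) has all three roots real and positive; equivalently, χ(λ) < 0 for all λ ≤ 0 and χ is the characteristic polynomial of a real symmetric matrix. -/
open Real Polynomial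

/-- The characteristic polynomial of the multiplier matrix `G` for `q = 3`. -/
noncomputable def chiG (lam : ℝ) : ℝ :=
  lam ^ 3 + (-15 * Real.sqrt 30 / 187 - 222 / 187) * lam ^ 2
    + (312 * Real.sqrt 30 / 34969 + 4533 / 69938) * lam
    + (-45 * Real.sqrt 30 / 13078406 - 656 / 6539203)

noncomputable def Gmat : Matrix (Fin 3) (Fin 3) ℝ :=
  !![Real.sqrt 30 / 187 + 8 / 187, -3 * Real.sqrt 30 / 187 - 24 / 187,
      3 * Real.sqrt 30 / 187 + 24 / 187;
    -3 * Real.sqrt 30 / 187 - 24 / 187, Real.sqrt 30 / 34 + 95 / 187,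
      -6 * Real.sqrt 30 / 187 - 9 / 17;
    3 * Real.sqrt 30 / 187 + 24 / 187, -6 * Real.sqrt 30 / 187 - 9 / 17,
      Real.sqrt 30 / 22 + 7 / 11]

lemma sqrt30_sq : Real.sqrt 30 ^ 2 = 30 := Real.sq_sqrt (by norm_num)

lemma sqrt30_lt : Real.sqrt 30 < 5.48 := by
  nlinarith [sqrt30_sq, Real.sqrt_nonneg 30]

lemma sqrt30_gt : 5.47 < Real.sqrt 30 := by
  nlinarith [sqrt30_sq, Real.sqrt_nonneg 30]

lemma eval_charpoly_gen (M : Matrix (Fin 3) (Fin 3) ℝ) (r : ℝ) :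
    (Matrix.charpoly M).eval r = (Matrix.scalar (Fin 3) r - M).det := by
  rw [Matrix.charpoly, eval_det, Matrix.matPolyEquiv_charmatrix]
  simp

lemma charpoly_G (lam : ℝ) : chiG lam = (Matrix.charpoly Gmat).eval lam := by
  rw [eval_charpoly_gen, Matrix.det_fin_three]
  have h := sqrt30_sq
  norm_num [Gmat, chiG, Matrix.scalar_apply, Matrix.diagonal_apply,
    Matrix.sub_apply, Fin.ext_iff, Matrix.cons_val_two, Matrix.vecHead, Matrix.vecTail]
  linear_combination (-27 * lam / 139876 - 29 * Real.sqrt 30 / 26156812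
    - 72 / 6539203) * h

lemma chiG_neg (lam : ℝ) (h : lam ≤ 0) : chiG lam < 0 := by
  have h1 := sqrt30_gt
  have h2 := sqrt30_lt
  have h3 : lam ^ 3 ≤ 0 := by nlinarith [sq_nonneg lam]
  have h4 : (-15 * Real.sqrt 30 / 187 - 222 / 187) * lam ^ 2 ≤ 0 :=
    mul_nonpos_of_nonpos_of_nonneg (by nlinarith) (sq_nonneg lam)
  have h5 : (312 * Real.sqrt 30 / 34969 + 4533 / 69938) * lam ≤ 0 :=
    mul_nonpos_of_nonneg_of_nonpos (by nlinarith) h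
  have h6 : (-45 * Real.sqrt 30 / 13078406 - 656 / 6539203) < 0 := by nlinarith
  unfold chiG
  linarith

lemma chiG_pos_1 : 0 < chiG (1 / 50) := by
  have h1 := sqrt30_gt
  have h2 := sqrt30_lt
  unfold chiG
  nlinarith

lemma chiG_neg_half : chiG (1 / 2) < 0 := by
  have h1 := sqrt30_gt
  have h2 := sqrt30_lt
  unfold chiG
  nlinarith

lemma chiG_pos_2 : 0 < chiG 2 := by
  have h1 := sqrt30_gt
  have h2 := sqrt30_lt
  unfold chiG
  nlinarith

lemma chiG_cont : Continuous chiG := by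
  unfold chiG; fun_prop

theorem chiG_roots_positive :
    (∃ l₁ l₂ l₃ : ℝ, 0 < l₁ ∧ 0 < l₂ ∧ 0 < l₃ ∧
      ∀ lam : ℝ, chiG lam = (lam - l₁) * (lam - l₂) * (lam - l₃))
    ∧ (∀ lam : ℝ, lam ≤ 0 → chiG lam < 0)
    ∧ (∃ A : Matrix (Fin 3) (Fin 3) ℝ, A.IsSymm ∧
        ∀ lam : ℝ, chiG lam = (Matrix.charpoly A).eval lam) := by
  have hGsymm : Gmat.IsSymm := by
    rw [Matrix.IsSymm]
    ext i j
    fin_cases i <;> fin_cases j <;> simp [Gmat]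
  -- obtain the three roots by IVT
  have hcont1 : ContinuousOn chiG (Set.Icc (0:ℝ) (1/50)) := chiG_cont.continuousOn
  have hcont2 : ContinuousOn chiG (Set.Icc (1/50:ℝ) (1/2)) := chiG_cont.continuousOn
  have hcont3 : ContinuousOn chiG (Set.Icc (1/2:ℝ) 2) := chiG_cont.continuousOn
  obtain ⟨r₁, hr₁mem, hr₁⟩ := intermediate_value_Ioo (by norm_num : (0:ℝ) ≤ 1/50) hcont1
    (Set.mem_Ioo.2 ⟨chiG_neg 0 le_rfl, chiG_pos_1⟩)
  obtain ⟨r₂, hr₂mem, hr₂⟩ := intermediate_value_Ioo' (by norm_num : (1/50:ℝ) ≤ 1/2) hcont2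
    (Set.mem_Ioo.2 ⟨chiG_neg_half, chiG_pos_1⟩)
  obtain ⟨r₃, hr₃mem, hr₃⟩ := intermediate_value_Ioo (by norm_num : (1/2:ℝ) ≤ 2) hcont3
    (Set.mem_Ioo.2 ⟨chiG_neg_half, chiG_pos_2⟩)
  obtain ⟨hr₁l, hr₁u⟩ := hr₁mem
  obtain ⟨hr₂l, hr₂u⟩ := hr₂mem
  obtain ⟨hr₃l, hr₃u⟩ := hr₃mem
  -- the polynomial
  set a : ℝ := -15 * Real.sqrt 30 / 187 - 222 / 187 with ha
  set b : ℝ := 312 * Real.sqrt 30 / 34969 + 4533 / 69938 with hb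
  set c : ℝ := -45 * Real.sqrt 30 / 13078406 - 656 / 6539203 with hc
  set P : ℝ[X] := X ^ 3 + C a * X ^ 2 + C b * X + C c with hP
  have hPeval : ∀ x : ℝ, P.eval x = chiG x := by
    intro x; simp [hP, chiG, ha, hb, hc]
  have hmonic : P.Monic := by
    unfold P; monicity!
  have hdeg : P.natDegree = 3 := by
    unfold P; compute_degree!
  have hne : P ≠ 0 := hmonic.ne_zero
  have h12 : r₁ ≠ r₂ := ne_of_lt (lt_trans hr₁u hr₂l)
  have h13 : r₁ ≠ r₃ := ne_of_lt (lt_trans hr₁u (lt_trans (lt_trans hr₂l hr₂u) hr₃l))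
  have h23 : r₂ ≠ r₃ := ne_of_lt (lt_trans hr₂u hr₃l)
  have hmem : ∀ r : ℝ, chiG r = 0 → r ∈ P.roots := by
    intro r hr
    rw [Polynomial.mem_roots hne]
    rw [Polynomial.IsRoot, hPeval, hr]
  have hS : ({r₁, r₂, r₃} : Multiset ℝ) ≤ P.roots := by
    rw [Multiset.le_iff_count]
    intro x
    by_cases hx1 : x = r₁
    · subst hx1
      have : Multiset.count x ({x, r₂, r₃} : Multiset ℝ) = 1 := by
        simp [Multiset.count_cons, Multiset.count_singleton, h12.symm, h13.symm,
          (h12 : x ≠ r₂), (h13 : x ≠ r₃)]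
      rw [this]
      exact Multiset.one_le_count_iff_mem.2 (hmem _ hr₁)
    · by_cases hx2 : x = r₂
      · subst hx2
        have : Multiset.count x ({r₁, x, r₃} : Multiset ℝ) = 1 := by
          simp [Multiset.count_cons, Multiset.count_singleton, hx1, (h23 : x ≠ r₃)]
        rw [this]
        exact Multiset.one_le_count_iff_mem.2 (hmem _ hr₂)
      · by_cases hx3 : x = r₃
        · subst hx3
          have : Multiset.count x ({r₁, r₂, x} : Multiset ℝ) = 1 := by
            simp [Multiset.count_cons, Multiset.count_singleton, hx1, hx2]
          rw [this]
          exact Multiset.one_le_count_iff_mem.2 (hmem _ hr₃)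
        · have : Multiset.count x ({r₁, r₂, r₃} : Multiset ℝ) = 0 := by
            simp [Multiset.count_cons, Multiset.count_singleton, hx1, hx2, hx3]
          rw [this]
          exact Nat.zero_le _
  have hcardle : P.roots.card ≤ 3 := by
    have := P.card_roots'
    rwa [hdeg] at this
  have hSeq : ({r₁, r₂, r₃} : Multiset ℝ) = P.roots := by
    refine Multiset.eq_of_le_of_card_le hS ?_
    simpa using hcardle
  have hsplits : P.Splits := by
    rw [Polynomial.splits_iff_card_roots, hdeg, ← hSeq]
    rfl
  have hfact := hsplits.eq_prod_roots_of_monic hmonic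
  rw [← hSeq] at hfact
  refine ⟨⟨r₁, r₂, r₃, hr₁l, lt_trans (by norm_num) hr₂l, lt_trans (by norm_num) hr₃l, ?_⟩,
    fun lam h => chiG_neg lam h, ⟨Gmat, hGsymm, charpoly_G⟩⟩
  intro lam
  have := congrArg (Polynomial.eval lam) hfact
  rw [hPeval] at this
  rw [this]
  simp [Multiset.prod_cons]
  ring
end
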